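/- For every (t,x) ∈ (0,T) × ℝ: ∂_t 𝔼[φ(u, ∂_x u, …, ∂_x^N u)(t,x,·)] = Σ_{k=0}^N 𝔼[ (∂_{a_k} φ)(u, ∂_x u, …, ∂_x^N u)(t,x,·) · ( ε ∂_x^{k+2} u(t,x,·) − ∂_x^{k+1}( g(u(t,·,·)) )(t,x,·) ) ]. (This is the weak form of the master equation of the new hierarchy for the joint probability density functions q^{(N)} of the spatial derivatives of u up to order N at a single point; the terms with k = N−1 and k = N involve derivatives of u of orders N+1 and N+2 and produce the hierarchical coupling A^{(N)}, B^{(N)} to q^{(N+1)}.) -/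

import Mathlib

open MeasureTheory

namespace Stmt5Aux
open ContDiff

noncomputable def pd (v : ℝ × ℝ) (f : ℝ × ℝ → ℝ) : ℝ × ℝ → ℝ :=
  fun p => fderiv ℝ f p v

lemma pd_contDiffOn {U : Set (ℝ × ℝ)} {f : ℝ × ℝ → ℝ} {v : ℝ × ℝ}
    (hU : IsOpen U) (hf : ContDiffOn ℝ ∞ f U) : ContDiffOn ℝ ∞ (pd v f) U := by
  have h1 : ContDiffOn ℝ ∞ (fderivWithin ℝ f U) U :=
    hf.fderivWithin hU.uniqueDiffOn (by simp)
  have h2 : ContDiffOn ℝ ∞ (fun q => fderivWithin ℝ f U q v) U :=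
    h1.clm_apply contDiffOn_const
  exact h2.congr fun q hq => by
    simp only [pd, fderivWithin_of_isOpen hU hq]

lemma pd_iter_contDiffOn {U : Set (ℝ × ℝ)} {f : ℝ × ℝ → ℝ} {v : ℝ × ℝ}
    (hU : IsOpen U) (hf : ContDiffOn ℝ ∞ f U) (k : ℕ) :
    ContDiffOn ℝ ∞ ((pd v)^[k] f) U := by
  induction k with
  | zero => exact hf
  | succ k ih =>
    rw [Function.iterate_succ_apply']
    exact pd_contDiffOn hU ih

lemma pd_diffAt {U : Set (ℝ × ℝ)} {f : ℝ × ℝ → ℝ} {p : ℝ × ℝ}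
    (hU : IsOpen U) (hf : ContDiffOn ℝ ∞ f U) (hp : p ∈ U) :
    DifferentiableAt ℝ f p :=
  (hf.contDiffAt (hU.mem_nhds hp)).differentiableAt (by simp)

lemma pd_congr {U : Set (ℝ × ℝ)} {f g : ℝ × ℝ → ℝ} {v p : ℝ × ℝ}
    (hU : IsOpen U) (h : ∀ q ∈ U, f q = g q) (hp : p ∈ U) :
    pd v f p = pd v g p := by
  have hev : f =ᶠ[nhds p] g := by
    filter_upwards [hU.mem_nhds hp] with q hq using h q hq
  simp only [pd, hev.fderiv_eq]

lemma pd_iter_congr {U : Set (ℝ × ℝ)} {f g : ℝ × ℝ → ℝ} {v : ℝ × ℝ}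
    (hU : IsOpen U) (h : ∀ q ∈ U, f q = g q) (k : ℕ) :
    ∀ p ∈ U, (pd v)^[k] f p = (pd v)^[k] g p := by
  induction k with
  | zero => exact h
  | succ k ih =>
    intro p hp
    rw [Function.iterate_succ_apply', Function.iterate_succ_apply']
    exact pd_congr hU ih hp

lemma pd_swap {U : Set (ℝ × ℝ)} {f : ℝ × ℝ → ℝ} {v w p : ℝ × ℝ}
    (hU : IsOpen U) (hf : ContDiffOn ℝ ∞ f U) (hp : p ∈ U) :
    pd v (pd w f) p = pd w (pd v f) p := by
  have hfp : ContDiffAt ℝ ∞ f p := hf.contDiffAt (hU.mem_nhds hp)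
  have hsymm : IsSymmSndFDerivAt ℝ f p := hfp.isSymmSndFDerivAt (by simp [minSmoothness_of_isRCLikeNormedField]; decide)
  have hd : DifferentiableAt ℝ (fderiv ℝ f) p :=
    (hfp.fderiv_right (m := 1) (by decide)).differentiableAt one_ne_zero
  have key : ∀ z : ℝ × ℝ, fderiv ℝ (fun q => fderiv ℝ f q z) p
      = (fderiv ℝ (fderiv ℝ f) p).flip z := by
    intro z
    rw [fderiv_clm_apply hd (differentiableAt_const z)]
    simp
  show fderiv ℝ (fun q => fderiv ℝ f q w) p v = fderiv ℝ (fun q => fderiv ℝ f q v) p w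
  rw [key w, key v]
  exact hsymm v w

lemma pd_swap_iter {U : Set (ℝ × ℝ)} {f : ℝ × ℝ → ℝ} {v w : ℝ × ℝ}
    (hU : IsOpen U) (hf : ContDiffOn ℝ ∞ f U) (k : ℕ) :
    ∀ p ∈ U, pd w ((pd v)^[k] f) p = (pd v)^[k] (pd w f) p := by
  induction k with
  | zero => intro p _; rfl
  | succ k ih =>
    intro p hp
    rw [Function.iterate_succ_apply']
    rw [pd_swap hU (pd_iter_contDiffOn hU hf k) hp]
    rw [pd_congr hU ih hp]
    exact congrFun (Function.iterate_succ_apply' (pd v) k (pd w f)).symm p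

lemma pd_iter_linear {U : Set (ℝ × ℝ)} {A B : ℝ × ℝ → ℝ} {v : ℝ × ℝ}
    (hU : IsOpen U) (hA : ContDiffOn ℝ ∞ A U) (hB : ContDiffOn ℝ ∞ B U)
    (c : ℝ) (k : ℕ) :
    ∀ p ∈ U, (pd v)^[k] (fun q => c * A q - B q) p
      = c * (pd v)^[k] A p - (pd v)^[k] B p := by
  induction k with
  | zero => intro p _; rfl
  | succ k ih =>
    intro p hp
    rw [Function.iterate_succ_apply', Function.iterate_succ_apply',
      Function.iterate_succ_apply']
    rw [pd_congr hU ih hp]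
    have hA' : DifferentiableAt ℝ ((pd v)^[k] A) p :=
      pd_diffAt hU (pd_iter_contDiffOn hU hA k) hp
    have hB' : DifferentiableAt ℝ ((pd v)^[k] B) p :=
      pd_diffAt hU (pd_iter_contDiffOn hU hB k) hp
    show fderiv ℝ _ p v = _
    have hsubd : HasFDerivAt (fun q => c * (pd v)^[k] A q - (pd v)^[k] B q) _ p :=
      (hA'.hasFDerivAt.const_mul c).sub hB'.hasFDerivAt
    rw [hsubd.fderiv]
    simp [pd]

lemma hasDerivAt_slice_snd {f : ℝ × ℝ → ℝ} {t x : ℝ}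
    (hf : DifferentiableAt ℝ f (t, x)) :
    HasDerivAt (fun y => f (t, y)) (fderiv ℝ f (t, x) (0, 1)) x := by
  have h : HasDerivAt (fun y : ℝ => ((t, y) : ℝ × ℝ)) ((0 : ℝ), (1 : ℝ)) x :=
    (hasDerivAt_const x t).prodMk (hasDerivAt_id x)
  exact hf.hasFDerivAt.comp_hasDerivAt x h

lemma hasDerivAt_slice_fst {f : ℝ × ℝ → ℝ} {t x : ℝ}
    (hf : DifferentiableAt ℝ f (t, x)) :
    HasDerivAt (fun s => f (s, x)) (fderiv ℝ f (t, x) (1, 0)) t := by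
  have h : HasDerivAt (fun s : ℝ => ((s, x) : ℝ × ℝ)) ((1 : ℝ), (0 : ℝ)) t :=
    (hasDerivAt_id t).prodMk (hasDerivAt_const t x)
  exact hf.hasFDerivAt.comp_hasDerivAt t h

lemma deriv_iter_slice {T : ℝ} {f : ℝ × ℝ → ℝ} {t : ℝ}
    (hf : ContDiffOn ℝ ∞ f (Set.Ioo 0 T ×ˢ (Set.univ : Set ℝ)))
    (ht : t ∈ Set.Ioo 0 T) (k : ℕ) (x : ℝ) :
    deriv^[k] (fun y => f (t, y)) x = (pd (0, 1))^[k] f (t, x) := by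
  have hU : IsOpen (Set.Ioo 0 T ×ˢ (Set.univ : Set ℝ)) := isOpen_Ioo.prod isOpen_univ
  induction k generalizing x with
  | zero => rfl
  | succ k ih =>
    rw [Function.iterate_succ_apply', Function.iterate_succ_apply']
    have hfun : deriv^[k] (fun y => f (t, y)) = fun y => (pd (0, 1))^[k] f (t, y) :=
      funext ih
    rw [hfun]
    have hdiff : DifferentiableAt ℝ ((pd (0, 1))^[k] f) (t, x) :=
      pd_diffAt hU (pd_iter_contDiffOn hU hf k) ⟨ht, trivial⟩
    exact (hasDerivAt_slice_snd hdiff).deriv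

/-- Key deterministic lemma: time derivative of the k-th spatial derivative. -/
lemma key_hasDerivAt {T ε : ℝ} {f G : ℝ × ℝ → ℝ} {t : ℝ}
    (hf : ContDiffOn ℝ ∞ f (Set.Ioo 0 T ×ˢ (Set.univ : Set ℝ)))
    (hG : ContDiffOn ℝ ∞ G (Set.Ioo 0 T ×ˢ (Set.univ : Set ℝ)))
    (hpde : ∀ s ∈ Set.Ioo 0 T, ∀ y : ℝ,
      deriv (fun s' => f (s', y)) s + deriv (fun y' => G (s, y')) y
        = ε * deriv^[2] (fun y' => f (s, y')) y)
    (k : ℕ) (ht : t ∈ Set.Ioo 0 T) (x : ℝ) :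
    HasDerivAt (fun s => deriv^[k] (fun y => f (s, y)) x)
      (ε * deriv^[k + 2] (fun y => f (t, y)) x
        - deriv^[k + 1] (fun y => G (t, y)) x) t := by
  set U : Set (ℝ × ℝ) := Set.Ioo 0 T ×ˢ (Set.univ : Set ℝ) with hUdef
  have hU : IsOpen U := isOpen_Ioo.prod isOpen_univ
  have hmem : (t, x) ∈ U := ⟨ht, trivial⟩
  -- The PDE, rewritten in terms of pd.
  have hpd_pde : ∀ p ∈ U, pd (1, 0) f p
      = ε * (pd (0, 1))^[2] f p - pd (0, 1) G p := by
    rintro ⟨s, y⟩ ⟨hs, -⟩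
    have hdf : DifferentiableAt ℝ f (s, y) := pd_diffAt hU hf ⟨hs, trivial⟩
    have e1 : pd (1, 0) f (s, y) = deriv (fun s' => f (s', y)) s :=
      (hasDerivAt_slice_fst hdf).deriv.symm
    have e2 : deriv^[2] (fun y' => f (s, y')) y = (pd (0, 1))^[2] f (s, y) :=
      deriv_iter_slice hf hs 2 y
    have e3 : deriv (fun y' => G (s, y')) y = pd (0, 1) G (s, y) := by
      have := deriv_iter_slice hG hs 1 y
      simpa using this
    have h := hpde s hs y
    rw [e2, e3] at h
    rw [e1]
    linarith
  -- time derivative of the pd-iterate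
  have hD : HasDerivAt (fun s => (pd (0, 1))^[k] f (s, x))
      (pd (1, 0) ((pd (0, 1))^[k] f) (t, x)) t :=
    hasDerivAt_slice_fst (pd_diffAt hU (pd_iter_contDiffOn hU hf k) hmem)
  have e4 : pd (1, 0) ((pd (0, 1))^[k] f) (t, x)
      = (pd (0, 1))^[k] (pd (1, 0) f) (t, x) :=
    pd_swap_iter hU hf k _ hmem
  have e5 : (pd (0, 1))^[k] (pd (1, 0) f) (t, x)
      = (pd (0, 1))^[k] (fun q => ε * (pd (0, 1))^[2] f q - pd (0, 1) G q) (t, x) :=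
    pd_iter_congr hU hpd_pde k _ hmem
  have e6 : (pd (0, 1))^[k] (fun q => ε * (pd (0, 1))^[2] f q - pd (0, 1) G q) (t, x)
      = ε * (pd (0, 1))^[k] ((pd (0, 1))^[2] f) (t, x)
        - (pd (0, 1))^[k] (pd (0, 1) G) (t, x) :=
    pd_iter_linear hU (pd_iter_contDiffOn hU hf 2) (pd_contDiffOn hU hG) ε k _ hmem
  have e7 : (pd (0, 1))^[k] ((pd (0, 1))^[2] f) (t, x) = (pd (0, 1))^[k + 2] f (t, x) :=
    (congrFun (Function.iterate_add_apply (pd (0, 1)) k 2 f) (t, x)).symm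
  have e8 : (pd (0, 1))^[k] (pd (0, 1) G) (t, x) = (pd (0, 1))^[k + 1] G (t, x) :=
    (congrFun (Function.iterate_succ_apply (pd (0, 1)) k G) (t, x)).symm
  have e9 : pd (1, 0) ((pd (0, 1))^[k] f) (t, x)
      = ε * deriv^[k + 2] (fun y => f (t, y)) x - deriv^[k + 1] (fun y => G (t, y)) x := by
    rw [e4, e5, e6, e7, e8, deriv_iter_slice hf ht (k + 2) x,
      deriv_iter_slice hG ht (k + 1) x]
  rw [e9] at hD
  apply hD.congr_of_eventuallyEq
  filter_upwards [Ioo_mem_nhds ht.1 ht.2] with s hs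
  exact deriv_iter_slice hf hs k x

/-- a.e.-measurability of iterated derivatives of a random smooth function. -/
lemma aemeasurable_iter_deriv {Ω : Type*} [MeasurableSpace Ω] {P : Measure Ω}
    (v : Ω → ℝ → ℝ) (hmeas : ∀ x : ℝ, AEMeasurable (fun o => v o x) P)
    (hsm : ∀ᵐ o ∂P, ContDiff ℝ ∞ (v o)) (k : ℕ) :
    ∀ x : ℝ, AEMeasurable (fun o => deriv^[k] (v o) x) P := by
  induction k with
  | zero => exact hmeas
  | succ k ih =>
    intro x
    apply aemeasurable_of_tendsto_metrizable_ae (u := Filter.atTop)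
      (f := fun (n : ℕ) o => ((n : ℝ) + 1) * (deriv^[k] (v o) (x + 1 / ((n : ℝ) + 1))
        - deriv^[k] (v o) x))
    · intro n
      exact ((ih (x + 1 / ((n : ℝ) + 1))).sub (ih x)).const_mul _
    · filter_upwards [hsm] with o ho
      have hsmk : ContDiff ℝ ∞ (deriv^[k] (v o)) := ContDiff.iterate_deriv k ho
      have hd : HasDerivAt (deriv^[k] (v o)) (deriv^[k + 1] (v o) x) x := by
        rw [Function.iterate_succ_apply']
        exact ((hsmk.differentiable (by decide)) x).hasDerivAt
      have hslope := hasDerivAt_iff_tendsto_slope.1 hd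
      have hseq : Filter.Tendsto (fun n : ℕ => x + 1 / ((n : ℝ) + 1)) Filter.atTop
          (nhdsWithin x {x}ᶜ) := by
        apply tendsto_nhdsWithin_of_tendsto_nhds_of_eventually_within
        · have : Filter.Tendsto (fun n : ℕ => 1 / ((n : ℝ) + 1)) Filter.atTop (nhds 0) :=
            tendsto_one_div_add_atTop_nhds_zero_nat
          simpa using (tendsto_const_nhds (x := x)).add this
        · filter_upwards with n
          have : (0 : ℝ) < 1 / ((n : ℝ) + 1) := by positivity
          simp only [Set.mem_compl_iff, Set.mem_singleton_iff]
          intro hcontr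
          nlinarith [hcontr]
      have := hslope.comp hseq
      apply this.congr
      intro n
      have hne : (1 : ℝ) / ((n : ℝ) + 1) ≠ 0 := by positivity
      simp only [Function.comp, slope_def_field]
      rw [div_eq_iff (by simpa using hne)]
      field_simp
      ring

lemma slice_smooth {T : ℝ} {f : ℝ × ℝ → ℝ}
    (hf : ContDiffOn ℝ ∞ f (Set.Ioo 0 T ×ˢ (Set.univ : Set ℝ)))
    {s : ℝ} (hs : s ∈ Set.Ioo 0 T) : ContDiff ℝ ∞ (fun y => f (s, y)) := by
  rw [← contDiffOn_univ]
  have hline : ContDiffOn ℝ ∞ (fun y : ℝ => ((s, y) : ℝ × ℝ)) Set.univ :=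
    (contDiff_const.prodMk contDiff_id).contDiffOn
  have := hf.comp hline (fun y _ => ⟨hs, trivial⟩)
  exact this

lemma aemeasurable_pi {ι : Type*} [Fintype ι] {Ω : Type*} [MeasurableSpace Ω]
    {P : Measure Ω} {f : Ω → ι → ℝ} (hf : ∀ i, AEMeasurable (fun o => f o i) P) :
    AEMeasurable f P := by
  choose g hg hfg using hf
  refine ⟨fun o i => g i o, measurable_pi_iff.2 fun i => hg i, ?_⟩
  filter_upwards [MeasureTheory.ae_all_iff.2 hfg] with o ho
  funext i
  exact ho i

variable {Ω : Type*} [MeasurableSpace Ω]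

/-- the vector of spatial derivatives of `u` up to order `N` at `(s, x)`. -/
noncomputable def Avec (N : ℕ) (u : ℝ → ℝ → Ω → ℝ) (x s : ℝ) (o : Ω) :
    Fin (N + 1) → ℝ := fun k => deriv^[(k : ℕ)] (fun y => u s y o) x

/-- the vector of time derivatives of the spatial derivatives, via the PDE. -/
noncomputable def Wvec (N : ℕ) (ε : ℝ) (g : ℝ → ℝ) (u : ℝ → ℝ → Ω → ℝ)
    (x s : ℝ) (o : Ω) : Fin (N + 1) → ℝ := fun k =>
  ε * deriv^[(k : ℕ) + 2] (fun y => u s y o) x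
    - deriv^[(k : ℕ) + 1] (fun y => g (u s y o)) x

end Stmt5Aux

open Stmt5Aux in
/-- weak form of the master equation of the new hierarchy for the joint
probability density of the spatial derivatives of `u` up to order `N` at a single point:
`∂_t 𝔼[φ(u,…,∂_x^N u)] = Σ_{k=0}^N 𝔼[(∂_{a_k} φ)(u,…,∂_x^N u) ·
  (ε ∂_x^{k+2} u − ∂_x^{k+1}(g(u)))]`. -/
theorem stmt5
    {Ω : Type*} [MeasurableSpace Ω] (P : Measure Ω) [IsProbabilityMeasure P]
    (T ε : ℝ) (hT : 0 < T) (hε : 0 < ε) (N : ℕ)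
    (g : ℝ → ℝ) (hg : ContDiff ℝ (⊤ : ℕ∞) g)
    (u : ℝ → ℝ → Ω → ℝ)
    (hu_meas : Measurable fun p : ℝ × ℝ × Ω => u p.1 p.2.1 p.2.2)
    (hu_smooth : ∀ᵐ ω ∂P,
      ContDiffOn ℝ (⊤ : ℕ∞) (fun p : ℝ × ℝ => u p.1 p.2 ω)
        (Set.Ioo 0 T ×ˢ (Set.univ : Set ℝ)))
    (hu_pde : ∀ᵐ ω ∂P, ∀ t ∈ Set.Ioo 0 T, ∀ x : ℝ,
      deriv (fun s => u s x ω) t + deriv (fun y => g (u t y ω)) x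
        = ε * deriv^[2] (fun y => u t y ω) x)
    (φ : (Fin (N + 1) → ℝ) → ℝ) (hφ : ContDiff ℝ 1 φ)
    (hφ' : ∃ C, ∀ a, ‖fderiv ℝ φ a‖ ≤ C)
    (hdom : ∀ K : Set (ℝ × ℝ), IsCompact K → K ⊆ Set.Ioo 0 T ×ˢ (Set.univ : Set ℝ) →
      ∃ h : Ω → ℝ, Integrable h P ∧ ∀ᵐ ω ∂P, ∀ p ∈ K,
        (∑ k ∈ Finset.range (N + 3), |deriv^[k] (fun y => u p.1 y ω) p.2|) +
          (∑ k ∈ Finset.range (N + 1),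
            |deriv^[k + 1] (fun y => g (u p.1 y ω)) p.2|) ≤ h ω) :
    ∀ t ∈ Set.Ioo 0 T, ∀ x : ℝ,
      deriv (fun s => ∫ ω, φ (fun k => deriv^[(k : ℕ)] (fun y => u s y ω) x) ∂P) t
        = ∑ k : Fin (N + 1), ∫ ω,
            fderiv ℝ φ (fun j => deriv^[(j : ℕ)] (fun y => u t y ω) x) (Pi.single k 1) *
              (ε * deriv^[(k : ℕ) + 2] (fun y => u t y ω) x
                - deriv^[(k : ℕ) + 1] (fun y => g (u t y ω)) x) ∂P := by
  classical
  intro t ht x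
  obtain ⟨C, hC⟩ := hφ'
  have hC0 : 0 ≤ C := le_trans (norm_nonneg _) (hC 0)
  have hgs : ContDiff ℝ ((⊤ : ℕ∞) : WithTop ℕ∞) g := hg.of_le (by simp)
  -- the open domain
  have hU : IsOpen (Set.Ioo 0 T ×ˢ (Set.univ : Set ℝ)) := isOpen_Ioo.prod isOpen_univ
  -- a compact time interval around t, inside (0, T)
  set δ : ℝ := min (t / 2) ((T - t) / 2) with hδdef
  have hδ : 0 < δ := lt_min (by linarith [ht.1]) (by linarith [ht.2])
  have hδ1 : δ ≤ t / 2 := min_le_left _ _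
  have hδ2 : δ ≤ (T - t) / 2 := min_le_right _ _
  have hsub : Set.Icc (t - δ) (t + δ) ⊆ Set.Ioo 0 T := by
    intro s hs
    exact ⟨by have := hs.1; have := ht.1; linarith, by have := hs.2; have := ht.2; linarith⟩
  have hKU : Set.Icc (t - δ) (t + δ) ×ˢ ({x} : Set ℝ) ⊆ Set.Ioo 0 T ×ˢ (Set.univ : Set ℝ) := by
    rintro ⟨s, y⟩ ⟨hs, -⟩
    exact ⟨hsub hs, trivial⟩
  obtain ⟨h, hint, hdomK⟩ := hdom _ (isCompact_Icc.prod isCompact_singleton) hKU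
  have hballIoo : Metric.ball t δ ⊆ Set.Ioo 0 T := by
    intro s hs
    rw [Metric.mem_ball, Real.dist_eq, abs_lt] at hs
    exact hsub ⟨by linarith [hs.1], by linarith [hs.2]⟩
  have hballK : ∀ s ∈ Metric.ball t δ,
      (s, x) ∈ Set.Icc (t - δ) (t + δ) ×ˢ ({x} : Set ℝ) := by
    intro s hs
    rw [Metric.mem_ball, Real.dist_eq, abs_lt] at hs
    exact ⟨⟨by linarith [hs.1], by linarith [hs.2]⟩, rfl⟩
  -- measurability of the iterated derivatives
  have hmeasU : ∀ s ∈ Set.Ioo 0 T, ∀ k : ℕ, ∀ x' : ℝ,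
      AEMeasurable (fun ω => deriv^[k] (fun y => u s y ω) x') P := by
    intro s hs k
    apply aemeasurable_iter_deriv (v := fun ω y => u s y ω)
    · intro x'
      exact (hu_meas.comp
        (measurable_const.prodMk (measurable_const.prodMk measurable_id))).aemeasurable
    · filter_upwards [hu_smooth] with ω hω using slice_smooth (hω.of_le (by simp)) hs
  have hmeasG : ∀ s ∈ Set.Ioo 0 T, ∀ k : ℕ, ∀ x' : ℝ,
      AEMeasurable (fun ω => deriv^[k] (fun y => g (u s y ω)) x') P := by
    intro s hs k
    apply aemeasurable_iter_deriv (v := fun ω y => g (u s y ω))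
    · intro x'
      exact (hg.continuous.measurable.comp (hu_meas.comp
        (measurable_const.prodMk (measurable_const.prodMk measurable_id)))).aemeasurable
    · filter_upwards [hu_smooth] with ω hω using
        hgs.comp (slice_smooth (hω.of_le (by simp)) hs)
  have asm_A : ∀ s ∈ Set.Ioo 0 T, AEStronglyMeasurable (fun ω => Avec N u x s ω) P := by
    intro s hs
    exact (aemeasurable_pi (ι := Fin (N + 1)) fun k => hmeasU s hs (k : ℕ) x).aestronglyMeasurable
  have asm_W : ∀ s ∈ Set.Ioo 0 T,
      AEStronglyMeasurable (fun ω => Wvec N ε g u x s ω) P := by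
    intro s hs
    exact (aemeasurable_pi (ι := Fin (N + 1)) fun k =>
      ((hmeasU s hs ((k : ℕ) + 2) x).const_mul ε).sub
        (hmeasG s hs ((k : ℕ) + 1) x)).aestronglyMeasurable
  have hcont_fderiv : Continuous (fderiv ℝ φ) := hφ.continuous_fderiv one_ne_zero
  have asm_F : ∀ s ∈ Set.Ioo 0 T,
      AEStronglyMeasurable (fun ω => φ (Avec N u x s ω)) P := fun s hs =>
    hφ.continuous.comp_aestronglyMeasurable (asm_A s hs)
  have asm_F' : AEStronglyMeasurable
      (fun ω => fderiv ℝ φ (Avec N u x t ω) (Wvec N ε g u x t ω)) P := by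
    have cont : Continuous (fun p : (Fin (N + 1) → ℝ) × (Fin (N + 1) → ℝ) =>
        fderiv ℝ φ p.1 p.2) :=
      isBoundedBilinearMap_apply.continuous.comp
        ((hcont_fderiv.comp continuous_fst).prodMk continuous_snd)
    exact cont.comp_aestronglyMeasurable ((asm_A t ht).prodMk (asm_W t ht))
  -- bounds
  have hWbound : ∀ᵐ ω ∂P, ∀ s ∈ Metric.ball t δ,
      ‖Wvec N ε g u x s ω‖ ≤ max ε 1 * h ω := by
    filter_upwards [hdomK] with ω hω
    intro s hs
    have hsum := hω (s, x) (hballK s hs)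
    set S1 := ∑ k ∈ Finset.range (N + 3), |deriv^[k] (fun y => u s y ω) x| with hS1def
    set S2 := ∑ k ∈ Finset.range (N + 1), |deriv^[k + 1] (fun y => g (u s y ω)) x| with hS2def
    have hS1 : 0 ≤ S1 := Finset.sum_nonneg fun _ _ => abs_nonneg _
    have hS2 : 0 ≤ S2 := Finset.sum_nonneg fun _ _ => abs_nonneg _
    have hh0 : 0 ≤ h ω := le_trans (by positivity) hsum
    have hmax0 : (0:ℝ) ≤ max ε 1 := le_trans zero_le_one (le_max_right _ _)
    apply (pi_norm_le_iff_of_nonneg (by positivity)).2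
    intro k
    have ha : |deriv^[(k : ℕ) + 2] (fun y => u s y ω) x| ≤ S1 :=
      Finset.single_le_sum (f := fun j => |deriv^[j] (fun y => u s y ω) x|)
        (fun j _ => abs_nonneg _) (Finset.mem_range.2 (by omega))
    have hb : |deriv^[(k : ℕ) + 1] (fun y => g (u s y ω)) x| ≤ S2 :=
      Finset.single_le_sum (f := fun j => |deriv^[j + 1] (fun y => g (u s y ω)) x|)
        (fun j _ => abs_nonneg _) (Finset.mem_range.2 k.isLt)
    have hε1 : ε ≤ max ε 1 := le_max_left _ _
    have h11 : (1:ℝ) ≤ max ε 1 := le_max_right _ _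
    calc ‖Wvec N ε g u x s ω k‖
        = |ε * deriv^[(k : ℕ) + 2] (fun y => u s y ω) x
            - deriv^[(k : ℕ) + 1] (fun y => g (u s y ω)) x| := rfl
      _ ≤ |ε * deriv^[(k : ℕ) + 2] (fun y => u s y ω) x|
            + |deriv^[(k : ℕ) + 1] (fun y => g (u s y ω)) x| := abs_sub _ _
      _ = ε * |deriv^[(k : ℕ) + 2] (fun y => u s y ω) x|
            + |deriv^[(k : ℕ) + 1] (fun y => g (u s y ω)) x| := by
          rw [abs_mul, abs_of_pos hε]
      _ ≤ max ε 1 * S1 + max ε 1 * S2 := by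
          have := abs_nonneg (deriv^[(k : ℕ) + 2] (fun y => u s y ω) x)
          nlinarith
      _ = max ε 1 * (S1 + S2) := by ring
      _ ≤ max ε 1 * h ω := by nlinarith
  have hAbound : ∀ᵐ ω ∂P, ‖Avec N u x t ω‖ ≤ h ω := by
    filter_upwards [hdomK] with ω hω
    have hsum : (∑ k ∈ Finset.range (N + 3), |deriv^[k] (fun y => u t y ω) x|) +
        (∑ k ∈ Finset.range (N + 1), |deriv^[k + 1] (fun y => g (u t y ω)) x|) ≤ h ω :=
      hω (t, x) ⟨⟨by linarith, by linarith⟩, rfl⟩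
    have hS2 : 0 ≤ ∑ k ∈ Finset.range (N + 1), |deriv^[k + 1] (fun y => g (u t y ω)) x| :=
      Finset.sum_nonneg fun _ _ => abs_nonneg _
    have hS1 : 0 ≤ ∑ k ∈ Finset.range (N + 3), |deriv^[k] (fun y => u t y ω) x| :=
      Finset.sum_nonneg fun _ _ => abs_nonneg _
    have hh0 : 0 ≤ h ω := le_trans (by positivity) hsum
    apply (pi_norm_le_iff_of_nonneg hh0).2
    intro k
    have ha : |deriv^[(k : ℕ)] (fun y => u t y ω) x|
        ≤ ∑ j ∈ Finset.range (N + 3), |deriv^[j] (fun y => u t y ω) x| :=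
      Finset.single_le_sum (f := fun j => |deriv^[j] (fun y => u t y ω) x|)
        (fun j _ => abs_nonneg _) (Finset.mem_range.2 (by omega))
    calc ‖Avec N u x t ω k‖ = |deriv^[(k : ℕ)] (fun y => u t y ω) x| := rfl
      _ ≤ h ω := by linarith
  -- differentiability in time, a.e.
  have h_diff : ∀ᵐ ω ∂P, ∀ s ∈ Metric.ball t δ,
      HasDerivAt (fun s' => φ (Avec N u x s' ω)) (fderiv ℝ φ (Avec N u x s ω) (Wvec N ε g u x s ω)) s := by
    filter_upwards [hu_smooth, hu_pde] with ω hsm hpde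
    intro s hs
    have hsIoo : s ∈ Set.Ioo 0 T := hballIoo hs
    have hfs : ContDiffOn ℝ ((⊤ : ℕ∞) : WithTop ℕ∞) (fun p : ℝ × ℝ => u p.1 p.2 ω)
        (Set.Ioo 0 T ×ˢ (Set.univ : Set ℝ)) := hsm.of_le (by simp)
    have hGs : ContDiffOn ℝ ((⊤ : ℕ∞) : WithTop ℕ∞) (fun p : ℝ × ℝ => g (u p.1 p.2 ω))
        (Set.Ioo 0 T ×ˢ (Set.univ : Set ℝ)) := hgs.comp_contDiffOn hfs
    have hvec : HasDerivAt (fun s' => Avec N u x s' ω) (Wvec N ε g u x s ω) s := by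
      apply hasDerivAt_pi.2
      intro k
      exact key_hasDerivAt hfs hGs hpde (k : ℕ) hsIoo x
    exact ((hφ.differentiable one_ne_zero (Avec N u x s ω)).hasFDerivAt).comp_hasDerivAt s hvec
  -- integrability of F t
  have hF_int : Integrable (fun ω => φ (Avec N u x t ω)) P := by
    apply Integrable.mono' ((integrable_const ‖φ 0‖).add (hint.const_mul C)) (asm_F t ht)
    filter_upwards [hAbound] with ω hA0
    have hmv := convex_univ.norm_image_sub_le_of_norm_fderiv_le
      (fun a _ => (hφ.differentiable one_ne_zero) a) (fun a _ => hC a)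
      (Set.mem_univ (0 : Fin (N + 1) → ℝ)) (Set.mem_univ (Avec N u x t ω))
    simp only [sub_zero] at hmv
    have : ‖φ (Avec N u x t ω)‖ ≤ ‖φ (Avec N u x t ω) - φ 0‖ + ‖φ 0‖ := by
      have h3 := norm_add_le (φ (Avec N u x t ω) - φ 0) (φ 0)
      simpa using h3
    have hmul : C * ‖Avec N u x t ω‖ ≤ C * h ω := mul_le_mul_of_nonneg_left hA0 hC0
    calc ‖φ (Avec N u x t ω)‖ ≤ ‖φ (Avec N u x t ω) - φ 0‖ + ‖φ 0‖ := this
      _ ≤ C * ‖Avec N u x t ω‖ + ‖φ 0‖ := by linarith [hmv]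
      _ ≤ ‖φ 0‖ + C * h ω := by linarith
  -- bound on the derivative
  have h_bound : ∀ᵐ ω ∂P, ∀ s ∈ Metric.ball t δ,
      ‖fderiv ℝ φ (Avec N u x s ω) (Wvec N ε g u x s ω)‖ ≤ C * (max ε 1 * h ω) := by
    filter_upwards [hWbound] with ω hWb
    intro s hs
    calc ‖fderiv ℝ φ (Avec N u x s ω) (Wvec N ε g u x s ω)‖
        ≤ ‖fderiv ℝ φ (Avec N u x s ω)‖ * ‖Wvec N ε g u x s ω‖ :=
          (fderiv ℝ φ (Avec N u x s ω)).le_opNorm _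
      _ ≤ C * (max ε 1 * h ω) := by
          apply mul_le_mul (hC _) (hWb s hs) (norm_nonneg _) hC0
  have bound_int : Integrable (fun ω => C * (max ε 1 * h ω)) P :=
    (hint.const_mul (max ε 1)).const_mul C
  have hF_meas : ∀ᶠ s in nhds t, AEStronglyMeasurable (fun ω => φ (Avec N u x s ω)) P := by
    filter_upwards [Ioo_mem_nhds ht.1 ht.2] with s hs using asm_F s hs
  obtain ⟨hFint', hderiv⟩ := hasDerivAt_integral_of_dominated_loc_of_deriv_le (Metric.ball_mem_nhds t hδ)
    hF_meas hF_int asm_F' h_bound bound_int h_diff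
  have h1 : deriv (fun s => ∫ ω, φ (fun k => deriv^[(k : ℕ)] (fun y => u s y ω) x) ∂P) t
      = ∫ ω, fderiv ℝ φ (Avec N u x t ω) (Wvec N ε g u x t ω) ∂P := hderiv.deriv
  rw [h1]
  -- split the integrand as a finite sum
  have hsplit : ∀ ω : Ω, fderiv ℝ φ (Avec N u x t ω) (Wvec N ε g u x t ω)
      = ∑ k : Fin (N + 1), fderiv ℝ φ (Avec N u x t ω) (Pi.single k 1) * Wvec N ε g u x t ω k := by
    intro ω
    have hW : Wvec N ε g u x t ω
        = ∑ k : Fin (N + 1), Wvec N ε g u x t ω k • (Pi.single k 1 : Fin (N + 1) → ℝ) := by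
      funext j
      simp [Pi.single_apply, Finset.sum_apply, mul_ite]
    conv_lhs => rw [hW]
    rw [map_sum]
    exact Finset.sum_congr rfl fun k _ => by
      rw [(fderiv ℝ φ (Avec N u x t ω)).map_smul]
      simp [mul_comm]
  have hsplit' : (fun ω => fderiv ℝ φ (Avec N u x t ω) (Wvec N ε g u x t ω))
      = fun ω => ∑ k : Fin (N + 1),
          fderiv ℝ φ (Avec N u x t ω) (Pi.single k 1) * Wvec N ε g u x t ω k :=
    funext hsplit
  rw [hsplit']
  have hintk : ∀ k : Fin (N + 1), Integrable
      (fun ω => fderiv ℝ φ (Avec N u x t ω) (Pi.single k 1) * Wvec N ε g u x t ω k) P := by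
    intro k
    have cont : Continuous (fun p : (Fin (N + 1) → ℝ) × (Fin (N + 1) → ℝ) =>
        fderiv ℝ φ p.1 (Pi.single k 1) * p.2 k) := by
      apply Continuous.mul
      · exact (ContinuousLinearMap.apply ℝ ℝ (Pi.single k 1)).continuous.comp
          (hcont_fderiv.comp continuous_fst)
      · exact (continuous_apply k).comp continuous_snd
    have asm_k : AEStronglyMeasurable
        (fun ω => fderiv ℝ φ (Avec N u x t ω) (Pi.single k 1) * Wvec N ε g u x t ω k) P :=
      cont.comp_aestronglyMeasurable ((asm_A t ht).prodMk (asm_W t ht))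
    apply Integrable.mono' (bound_int.const_mul 1) asm_k
    filter_upwards [hWbound] with ω hWb
    have hWk : ‖Wvec N ε g u x t ω k‖ ≤ max ε 1 * h ω := by
      have h1 := hWb t (Metric.mem_ball_self hδ)
      exact le_trans (norm_le_pi_norm _ k) h1
    have hsingle : ‖(Pi.single k 1 : Fin (N + 1) → ℝ)‖ ≤ 1 := by
      apply (pi_norm_le_iff_of_nonneg zero_le_one).2
      intro j
      rcases eq_or_ne j k with rfl | hne
      · simp
      · simp [Pi.single_apply, hne]
    have hWnn : 0 ≤ max ε 1 * h ω := le_trans (norm_nonneg _) hWk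
    calc ‖fderiv ℝ φ (Avec N u x t ω) (Pi.single k 1) * Wvec N ε g u x t ω k‖
        = ‖fderiv ℝ φ (Avec N u x t ω) (Pi.single k 1)‖ * ‖Wvec N ε g u x t ω k‖ := by
          rw [norm_mul]
      _ ≤ (C * 1) * (max ε 1 * h ω) := by
          apply mul_le_mul _ hWk (norm_nonneg _) (by positivity)
          calc ‖fderiv ℝ φ (Avec N u x t ω) (Pi.single k 1)‖
              ≤ ‖fderiv ℝ φ (Avec N u x t ω)‖ * ‖(Pi.single k 1 : Fin (N + 1) → ℝ)‖ :=
                ContinuousLinearMap.le_opNorm _ _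
            _ ≤ C * 1 := mul_le_mul (hC _) hsingle (norm_nonneg _) hC0
      _ = 1 * (C * (max ε 1 * h ω)) := by ring
  rw [integral_finset_sum _ (fun k _ => hintk k)]
  rfl
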